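/- Let p be a prime and x, y, z ∈ ℚ_p. Set Y = [[x,y],[y,z]], n = [[1,0,x,y],[0,1,y,z],[0,0,1,0],[0,0,0,1]] and σ = s₂s₁s₂. Then σ·n ∈ P_S(ℚ_p)·B(p) if and only if min{v_p(x), v_p(y), v_p(z)} > v_p(xz − y²) (with the convention v_p(0) = +∞, this forces xz − y² ≠ 0, i.e. Y invertible). Moreover, in that case, whenever σ·n = q·γ with q ∈ P_S(ℚ_p) and γ ∈ B(p), one has m₂(q) ∈ [[0,1],[1,0]]·Y⁻¹·Γ₀(p). -/

import Mathlib

open Matrix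

/-- The standard symplectic similitude matrix `J`. -/
noncomputable def J4 (p : ℕ) [Fact p.Prime] : Matrix (Fin 4) (Fin 4) ℚ_[p] :=
  !![0, 0, 1, 0; 0, 0, 0, 1; -1, 0, 0, 0; 0, -1, 0, 0]

/-- `GSp₄(ℚ_p)`: invertible 4×4 matrices `g` with `gᵀ·J·g = μ·J` for some `μ ≠ 0`. -/
def GSp4 (p : ℕ) [Fact p.Prime] : Set (Matrix (Fin 4) (Fin 4) ℚ_[p]) :=
  {g | g.det ≠ 0 ∧ ∃ μ : ℚ_[p], μ ≠ 0 ∧ gᵀ * J4 p * g = μ • J4 p}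

/-- The congruence subgroup `B(p)` of `GSp₄(ℤ_p)`: all entries in `ℤ_p`, similitude factor a
unit, and the entries at positions (2,1), (3,1), (4,1), (3,2), (4,2), (3,4) in `pℤ_p`. -/
def Bp (p : ℕ) [Fact p.Prime] : Set (Matrix (Fin 4) (Fin 4) ℚ_[p]) :=
  {g | (∀ i j, ‖g i j‖ ≤ 1) ∧ (∃ μ : ℚ_[p], ‖μ‖ = 1 ∧ gᵀ * J4 p * g = μ • J4 p) ∧
    ‖g 1 0‖ ≤ (p : ℝ)⁻¹ ∧ ‖g 2 0‖ ≤ (p : ℝ)⁻¹ ∧ ‖g 3 0‖ ≤ (p : ℝ)⁻¹ ∧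
    ‖g 2 1‖ ≤ (p : ℝ)⁻¹ ∧ ‖g 3 1‖ ≤ (p : ℝ)⁻¹ ∧ ‖g 2 3‖ ≤ (p : ℝ)⁻¹}

/-- The Siegel parabolic `P_S(ℚ_p)`: entries at positions (3,1), (3,2), (4,1), (4,2)
vanish. -/
def PS (p : ℕ) [Fact p.Prime] : Set (Matrix (Fin 4) (Fin 4) ℚ_[p]) :=
  {g | g ∈ GSp4 p ∧ g 2 0 = 0 ∧ g 2 1 = 0 ∧ g 3 0 = 0 ∧ g 3 1 = 0}

/-- The upper-left `GL₂`-block `m₂(q)` of an element of the Siegel parabolic. -/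
def m2S (p : ℕ) [Fact p.Prime] (q : Matrix (Fin 4) (Fin 4) ℚ_[p]) :
    Matrix (Fin 2) (Fin 2) ℚ_[p] :=
  !![q 0 0, q 0 1; q 1 0, q 1 1]

/-- `Γ₀(p) = {γ ∈ GL₂(ℤ_p) : γ₂₁ ∈ pℤ_p}`. -/
def Gamma0 (p : ℕ) [Fact p.Prime] : Set (Matrix (Fin 2) (Fin 2) ℚ_[p]) :=
  {γ | (∀ i j, ‖γ i j‖ ≤ 1) ∧ ‖γ.det‖ = 1 ∧ ‖γ 1 0‖ ≤ (p : ℝ)⁻¹}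

/-- The Weyl element `s₁`. -/
noncomputable def s1 (p : ℕ) [Fact p.Prime] : Matrix (Fin 4) (Fin 4) ℚ_[p] :=
  !![0, 1, 0, 0; 1, 0, 0, 0; 0, 0, 0, 1; 0, 0, 1, 0]

/-- The Weyl element `s₂`. -/
noncomputable def s2 (p : ℕ) [Fact p.Prime] : Matrix (Fin 4) (Fin 4) ℚ_[p] :=
  !![1, 0, 0, 0; 0, 0, 0, 1; 0, 0, 1, 0; 0, -1, 0, 0]

/-- The unipotent matrix `n` attached to `(x, y, z)` (Siegel setting). -/
noncomputable def nS (p : ℕ) [Fact p.Prime] (x y z : ℚ_[p]) : Matrix (Fin 4) (Fin 4) ℚ_[p] :=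
  !![1, 0, x, y; 0, 1, y, z; 0, 0, 1, 0; 0, 0, 0, 1]

/-!
Write `w = [[0, 1], [1, 0]]`, so that `σ·n = [[0, w], [-w, -wY]]` in 2×2 blocks. If
`σ·n = q·γ` with `q = [[A, B], [0, D]] ∈ P_S` and `γ = [[a, b], [c, d]] ∈ B(p)`, then `Dc = -w`
and `Dd = -wY` force `d = cY`. The symplectic relation `aᵀd - cᵀb = μ` with `μ` a unit and
`c ≡ 0 mod p` puts `a` and `d` in `GL₂(ℤ_p)`, hence `Y⁻¹ = d⁻¹c ∈ p·M₂(ℤ_p)`, which is the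
valuation condition. Moreover `A(b - aY) = w`, i.e. `A = wY⁻¹(bY⁻¹ - a)⁻¹`, and
`bY⁻¹ - a ≡ -a mod p` lies in `Γ₀(p)`. Conversely, if `Y⁻¹ ∈ p·M₂(ℤ_p)` then
`σ·n = [[-wY⁻¹, w], [0, -wY]]·[[1, 0], [Y⁻¹, 1]]` is such a factorization.
-/

section Ultrametric

variable {K : Type*} [NormedField K]

theorem norm_mul_le_of_le_one {a b : K} {r : ℝ} (ha : ‖a‖ ≤ 1) (hb : ‖b‖ ≤ r) : ‖a * b‖ ≤ r := by
  rw [norm_mul]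
  exact (mul_le_of_le_one_left (norm_nonneg b) ha).trans hb

namespace Matrix

theorem inv_fin_two (M : Matrix (Fin 2) (Fin 2) K) :
    M⁻¹ = M.det⁻¹ • !![M 1 1, -M 0 1; -M 1 0, M 0 0] := by
  rw [inv_def, adjugate_fin_two, Ring.inverse_eq_inv']

theorem norm_inv_apply_le_one {M : Matrix (Fin 2) (Fin 2) K} (hM : ∀ i j, ‖M i j‖ ≤ 1)
    (hdet : ‖M.det‖ = 1) (i j : Fin 2) : ‖M⁻¹ i j‖ ≤ 1 := by
  rw [inv_fin_two]
  fin_cases i <;> fin_cases j <;> simp [hdet, hM]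

end Matrix

variable [IsUltrametricDist K]

namespace IsUltrametricDist

theorem norm_add_le_of_le {a b : K} {r : ℝ} (ha : ‖a‖ ≤ r) (hb : ‖b‖ ≤ r) : ‖a + b‖ ≤ r :=
  (IsUltrametricDist.norm_add_le_max a b).trans (max_le ha hb)

theorem norm_sub_le_of_le {a b : K} {r : ℝ} (ha : ‖a‖ ≤ r) (hb : ‖b‖ ≤ r) : ‖a - b‖ ≤ r := by
  rw [sub_eq_add_neg]
  exact norm_add_le_of_le ha (by rwa [norm_neg])

end IsUltrametricDist

namespace Matrix

theorem norm_mul_apply_le {n : Type*} [Fintype n] {M N : Matrix n n K} {r s : ℝ}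
    (hM : ∀ i j, ‖M i j‖ ≤ r) (hN : ∀ i j, ‖N i j‖ ≤ s) (i j : n) : ‖(M * N) i j‖ ≤ r * s := by
  have hr : 0 ≤ r := (norm_nonneg _).trans (hM i i)
  have hs : 0 ≤ s := (norm_nonneg _).trans (hN j j)
  refine IsUltrametricDist.norm_sum_le_of_forall_le_of_nonneg (mul_nonneg hr hs) fun k _ => ?_
  rw [norm_mul]
  exact mul_le_mul (hM i k) (hN k j) (norm_nonneg _) hr

theorem norm_det_fin_two_le_one {M : Matrix (Fin 2) (Fin 2) K} (hM : ∀ i j, ‖M i j‖ ≤ 1) :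
    ‖M.det‖ ≤ 1 := by
  rw [det_fin_two]
  exact IsUltrametricDist.norm_sub_le_of_le (norm_mul_le_of_le_one (hM 0 0) (hM 1 1))
    (norm_mul_le_of_le_one (hM 0 1) (hM 1 0))

theorem norm_det_add_eq_one {M E : Matrix (Fin 2) (Fin 2) K} {r : ℝ} (hr : r < 1)
    (hM : ∀ i j, ‖M i j‖ ≤ 1) (hE : ∀ i j, ‖E i j‖ ≤ r) (hdet : ‖M.det‖ = 1) :
    ‖(M + E).det‖ = 1 := by
  have hME : ∀ i j, ‖(M + E) i j‖ ≤ 1 := fun i j =>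
    IsUltrametricDist.norm_add_le_of_le (hM i j) ((hE i j).trans hr.le)
  have hsmall : ‖(M + E).det - M.det‖ ≤ r := by
    have : (M + E).det - M.det =
        (M 0 0 * E 1 1 + E 0 0 * (M + E) 1 1) - (M 0 1 * E 1 0 + E 0 1 * (M + E) 1 0) := by
      simp only [det_fin_two, add_apply]; ring
    rw [this, mul_comm (E 0 0), mul_comm (E 0 1)]
    exact IsUltrametricDist.norm_sub_le_of_le
      (IsUltrametricDist.norm_add_le_of_le (norm_mul_le_of_le_one (hM 0 0) (hE 1 1))
        (norm_mul_le_of_le_one (hME 1 1) (hE 0 0)))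
      (IsUltrametricDist.norm_add_le_of_le (norm_mul_le_of_le_one (hM 0 1) (hE 1 0))
        (norm_mul_le_of_le_one (hME 1 0) (hE 0 1)))
  rw [← hdet, ← sub_add_cancel (M + E).det M.det]
  exact IsUltrametricDist.norm_add_eq_max_of_norm_ne_norm (by linarith) |>.trans
    (max_eq_right (by linarith))

theorem norm_inv_apply_le_of_eq_mul {c d Y : Matrix (Fin 2) (Fin 2) K} {r : ℝ} (hdY : d = c * Y)
    (hd : ∀ i j, ‖d i j‖ ≤ 1) (hdet : ‖d.det‖ = 1) (hc : ∀ i j, ‖c i j‖ ≤ r) :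
    Y.det ≠ 0 ∧ ∀ i j, ‖Y⁻¹ i j‖ ≤ r := by
  have hd0 : d.det ≠ 0 := norm_ne_zero_iff.1 (hdet ▸ one_ne_zero)
  have hY : Y.det ≠ 0 := right_ne_zero_of_mul (by rwa [← det_mul, ← hdY])
  have hYinv : Y⁻¹ = d⁻¹ * c := inv_eq_left_inv <| by
    rw [mul_assoc, ← hdY, nonsing_inv_mul _ (isUnit_iff_ne_zero.2 hd0)]
  refine ⟨hY, fun i j => ?_⟩
  simpa [hYinv] using norm_mul_apply_le (norm_inv_apply_le_one hd hdet) hc i j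

end Matrix

end Ultrametric

namespace Matrix

variable {R : Type*}

theorem eq_mul_of_mul_eq_of_mul_eq_mul {n : Type*} [Fintype n] [DecidableEq n] [CommRing R]
    {D c d W Y : Matrix n n R}
    (hW : IsUnit W.det) (hc : D * c = W) (hd : D * d = W * Y) : d = c * Y := by
  have hc' : c * (W⁻¹ * D) = 1 :=
    mul_eq_one_comm.1 (by rw [mul_assoc, hc, nonsing_inv_mul _ hW])
  calc d = c * (W⁻¹ * D) * d := by rw [hc', one_mul]
    _ = c * Y := by rw [mul_assoc, mul_assoc, hd, ← mul_assoc W⁻¹, nonsing_inv_mul _ hW, one_mul]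

def fromBlocksFin (A B C D : Matrix (Fin 2) (Fin 2) R) : Matrix (Fin 4) (Fin 4) R :=
  reindex finSumFinEquiv finSumFinEquiv (fromBlocks A B C D)

theorem exists_eq_fromBlocksFin (g : Matrix (Fin 4) (Fin 4) R) :
    ∃ A B C D, g = fromBlocksFin A B C D := by
  set M := (reindex (finSumFinEquiv (m := 2) (n := 2)) (finSumFinEquiv (m := 2) (n := 2))).symm g
  exact ⟨M.toBlocks₁₁, M.toBlocks₁₂, M.toBlocks₂₁, M.toBlocks₂₂, by
    rw [fromBlocksFin, fromBlocks_toBlocks, Equiv.apply_symm_apply]⟩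

theorem fromBlocksFin_inj {A B C D A' B' C' D' : Matrix (Fin 2) (Fin 2) R} :
    fromBlocksFin A B C D = fromBlocksFin A' B' C' D' ↔ A = A' ∧ B = B' ∧ C = C' ∧ D = D' := by
  simp only [fromBlocksFin, EmbeddingLike.apply_eq_iff_eq, fromBlocks_inj]

theorem forall_fromBlocksFin_apply {P : R → Prop} {A B C D : Matrix (Fin 2) (Fin 2) R} :
    (∀ i j, P (fromBlocksFin A B C D i j)) ↔
      (∀ i j, P (A i j)) ∧ (∀ i j, P (B i j)) ∧ (∀ i j, P (C i j)) ∧ ∀ i j, P (D i j) := by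
  let e : Fin 4 ≃ Fin 2 ⊕ Fin 2 := (finSumFinEquiv (m := 2) (n := 2)).symm
  refine e.forall_congr_left.trans ((forall_congr' fun _ => e.forall_congr_left).trans ?_)
  simp only [fromBlocksFin, e, reindex_apply, submatrix_apply, Equiv.symm_symm,
    Equiv.symm_apply_apply, Sum.forall, fromBlocks_apply₁₁, fromBlocks_apply₁₂,
    fromBlocks_apply₂₁, fromBlocks_apply₂₂, forall_and]
  tauto

theorem fromBlocksFin_transpose (A B C D : Matrix (Fin 2) (Fin 2) R) :
    (fromBlocksFin A B C D)ᵀ = fromBlocksFin Aᵀ Cᵀ Bᵀ Dᵀ := by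
  simp only [fromBlocksFin, transpose_reindex, fromBlocks_transpose]

theorem smul_fromBlocksFin [Mul R] (μ : R) (A B C D : Matrix (Fin 2) (Fin 2) R) :
    μ • fromBlocksFin A B C D = fromBlocksFin (μ • A) (μ • B) (μ • C) (μ • D) := by
  rw [fromBlocksFin, fromBlocksFin, ← fromBlocks_smul]
  rfl

theorem fromBlocksFin_mul [NonUnitalNonAssocSemiring R]
    (A B C D A' B' C' D' : Matrix (Fin 2) (Fin 2) R) :
    fromBlocksFin A B C D * fromBlocksFin A' B' C' D' =
      fromBlocksFin (A * A' + B * C') (A * B' + B * D') (C * A' + D * C') (C * B' + D * D') := by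
  simp only [fromBlocksFin, reindex_apply, submatrix_mul_equiv, fromBlocks_multiply]

end Matrix

section Siegel

variable {p : ℕ} [Fact p.Prime]

theorem inv_prime_lt_one : (p : ℝ)⁻¹ < 1 :=
  inv_lt_one_of_one_lt₀ (by exact_mod_cast (Fact.out : p.Prime).one_lt)

theorem J4_eq_fromBlocksFin : J4 p = fromBlocksFin 0 1 (-1) 0 := by
  ext i j
  fin_cases i <;> fin_cases j <;> rfl

theorem det_J4 : (J4 p).det = 1 := by
  simp [J4, det_succ_row_zero, Fin.sum_univ_succ, Fin.succAbove]

theorem fromBlocksFin_transpose_mul_J4_mul (a b c d : Matrix (Fin 2) (Fin 2) ℚ_[p]) :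
    (fromBlocksFin a b c d)ᵀ * J4 p * fromBlocksFin a b c d =
      fromBlocksFin (aᵀ * c - cᵀ * a) (aᵀ * d - cᵀ * b) (bᵀ * c - dᵀ * a) (bᵀ * d - dᵀ * b) := by
  simp only [J4_eq_fromBlocksFin, fromBlocksFin_transpose, fromBlocksFin_mul, mul_zero, mul_one,
    mul_neg, neg_mul, add_zero, zero_add, fromBlocksFin_inj]
  refine ⟨?_, ?_, ?_, ?_⟩ <;> abel

theorem det_ne_zero_of_transpose_mul_J4_mul_eq {g : Matrix (Fin 4) (Fin 4) ℚ_[p]} {μ : ℚ_[p]}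
    (hμ : μ ≠ 0) (h : gᵀ * J4 p * g = μ • J4 p) : g.det ≠ 0 := by
  have := congrArg det h
  rw [det_mul, det_mul, det_transpose, det_smul, det_J4, mul_one, mul_one] at this
  intro hg
  rw [hg, mul_zero] at this
  exact pow_ne_zero _ hμ this.symm

theorem fromBlocksFin_mem_PS {A B D : Matrix (Fin 2) (Fin 2) ℚ_[p]} {μ : ℚ_[p]} (hμ : μ ≠ 0)
    (hAD : Aᵀ * D = μ • 1) (hBD : Bᵀ * D = Dᵀ * B) : fromBlocksFin A B 0 D ∈ PS p := by
  have hJ : (fromBlocksFin A B 0 D)ᵀ * J4 p * fromBlocksFin A B 0 D = μ • J4 p := by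
    have hDA : Dᵀ * A = μ • 1 := by
      rw [← transpose_transpose A, ← transpose_mul, hAD, transpose_smul, transpose_one]
    rw [fromBlocksFin_transpose_mul_J4_mul, J4_eq_fromBlocksFin, smul_fromBlocksFin, hBD, hAD, hDA]
    simp
  exact ⟨⟨det_ne_zero_of_transpose_mul_J4_mul_eq hμ hJ, μ, hμ, hJ⟩, rfl, rfl, rfl, rfl⟩

theorem fromBlocksFin_one_zero_mem_Bp {C : Matrix (Fin 2) (Fin 2) ℚ_[p]} (hC : Cᵀ = C)
    (hCp : ∀ i j, ‖C i j‖ ≤ (p : ℝ)⁻¹) : fromBlocksFin 1 0 C 1 ∈ Bp p := by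
  have hone : ∀ i j, ‖(1 : Matrix (Fin 2) (Fin 2) ℚ_[p]) i j‖ ≤ 1 := by
    intro i j
    rw [one_apply]
    split_ifs <;> simp
  have hzero : ‖(0 : ℚ_[p])‖ ≤ (p : ℝ)⁻¹ := by simp
  refine ⟨forall_fromBlocksFin_apply (P := fun t => ‖t‖ ≤ 1).2 ⟨hone, by simp,
    fun i j => (hCp i j).trans inv_prime_lt_one.le, hone⟩, ⟨1, norm_one, ?_⟩, hzero,
    hCp 0 0, hCp 1 0, hCp 0 1, hCp 1 1, hzero⟩
  rw [fromBlocksFin_transpose_mul_J4_mul, J4_eq_fromBlocksFin, one_smul, hC]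
  simp

namespace Gamma0

variable {g : Matrix (Fin 2) (Fin 2) ℚ_[p]}

theorem det_ne_zero (hg : g ∈ Gamma0 p) : g.det ≠ 0 :=
  norm_ne_zero_iff.1 (hg.2.1 ▸ one_ne_zero)

theorem neg_mem (hg : g ∈ Gamma0 p) : -g ∈ Gamma0 p := by
  obtain ⟨hint, hdet, h10⟩ := hg
  exact ⟨fun i j => by simpa using hint i j, by simpa [det_neg] using hdet, by simpa using h10⟩

theorem add_mem_of_norm_le {E : Matrix (Fin 2) (Fin 2) ℚ_[p]} (hg : g ∈ Gamma0 p)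
    (hE : ∀ i j, ‖E i j‖ ≤ (p : ℝ)⁻¹) : g + E ∈ Gamma0 p := by
  obtain ⟨hint, hdet, h10⟩ := hg
  exact ⟨fun i j =>
      IsUltrametricDist.norm_add_le_of_le (hint i j) ((hE i j).trans inv_prime_lt_one.le),
    norm_det_add_eq_one inv_prime_lt_one hint hE hdet,
    IsUltrametricDist.norm_add_le_of_le h10 (hE 1 0)⟩

theorem inv_mem (hg : g ∈ Gamma0 p) : g⁻¹ ∈ Gamma0 p := by
  obtain ⟨hint, hdet, h10⟩ := hg
  refine ⟨norm_inv_apply_le_one hint hdet, ?_, ?_⟩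
  · rw [det_nonsing_inv, Ring.inverse_eq_inv', norm_inv, hdet, inv_one]
  · simpa [inv_fin_two, hdet] using h10

end Gamma0

theorem exists_mem_Gamma0_of_blocks {A B D a b c d Y : Matrix (Fin 2) (Fin 2) ℚ_[p]}
    (ha : a ∈ Gamma0 p) (hb : ∀ i j, ‖b i j‖ ≤ 1) (hc : ∀ i j, ‖c i j‖ ≤ (p : ℝ)⁻¹)
    (hd : ∀ i j, ‖d i j‖ ≤ 1) (hdet : ‖d.det‖ = 1)
    (h₁ : A * a + B * c = 0) (h₂ : A * b + B * d = !![0, 1; 1, 0])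
    (h₃ : D * c = -!![0, 1; 1, 0]) (h₄ : D * d = -(!![0, 1; 1, 0] * Y)) :
    Y.det ≠ 0 ∧ (∀ i j, ‖Y⁻¹ i j‖ ≤ (p : ℝ)⁻¹) ∧
      ∃ γ' ∈ Gamma0 p, A = !![0, 1; 1, 0] * Y⁻¹ * γ' := by
  have hdY : d = c * Y := eq_mul_of_mul_eq_of_mul_eq_mul
    (isUnit_iff_ne_zero.2 (by simp [det_fin_two])) h₃ (by rw [h₄, neg_mul])
  obtain ⟨hY, hYinv⟩ := norm_inv_apply_le_of_eq_mul hdY hd hdet hc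
  have hYu : IsUnit Y.det := isUnit_iff_ne_zero.2 hY
  set M := -a + b * Y⁻¹
  have hM : M ∈ Gamma0 p :=
    Gamma0.add_mem_of_norm_le (Gamma0.neg_mem ha) (by simpa using norm_mul_apply_le hb hYinv)
  refine ⟨hY, hYinv, M⁻¹, Gamma0.inv_mem hM, ?_⟩
  have hAMY : A * M * Y = !![0, 1; 1, 0] := by
    have hAa : A * a = -(B * c) := eq_neg_of_add_eq_zero_left h₁
    rw [← h₂, hdY, mul_assoc, add_mul, neg_mul, mul_assoc b, nonsing_inv_mul _ hYu, mul_one,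
      mul_add, mul_neg, ← mul_assoc, hAa, neg_mul, neg_neg, mul_assoc, add_comm]
  calc A = A * M * Y * (Y⁻¹ * M⁻¹) := by
        rw [mul_assoc, mul_assoc, ← mul_assoc Y, mul_nonsing_inv _ hYu, one_mul,
          mul_nonsing_inv _ (isUnit_iff_ne_zero.2 (Gamma0.det_ne_zero hM)), mul_one]
    _ = !![0, 1; 1, 0] * Y⁻¹ * M⁻¹ := by rw [hAMY, mul_assoc]

theorem blocks_of_fromBlocksFin_mem_Bp {a b c d : Matrix (Fin 2) (Fin 2) ℚ_[p]}
    (h : fromBlocksFin a b c d ∈ Bp p) :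
    a ∈ Gamma0 p ∧ (∀ i j, ‖b i j‖ ≤ 1) ∧ (∀ i j, ‖c i j‖ ≤ (p : ℝ)⁻¹) ∧
      (∀ i j, ‖d i j‖ ≤ 1) ∧ ‖d.det‖ = 1 := by
  obtain ⟨hint, ⟨μ, hμ, hJ⟩, h10, h20, h30, h21, h31, -⟩ := h
  obtain ⟨ha, hb, -, hd⟩ := (forall_fromBlocksFin_apply (P := fun t => ‖t‖ ≤ 1)).1 hint
  have hc : ∀ i j, ‖c i j‖ ≤ (p : ℝ)⁻¹ := by
    intro i j
    fin_cases i <;> fin_cases j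
    exacts [h20, h21, h30, h31]
  rw [fromBlocksFin_transpose_mul_J4_mul, J4_eq_fromBlocksFin, smul_fromBlocksFin,
    fromBlocksFin_inj, smul_neg] at hJ
  -- `aᵀd ≡ μ` modulo `p`, and `μ` is a unit, so `a` and `d` lie in `GL₂(ℤ_p)`.
  have hμ1 : ∀ i j, ‖(μ • 1 : Matrix (Fin 2) (Fin 2) ℚ_[p]) i j‖ ≤ 1 := by
    intro i j
    rw [Matrix.smul_apply, one_apply]
    split_ifs <;> simp [hμ]
  have hprod : ‖a.det‖ * ‖d.det‖ = 1 := by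
    rw [← norm_mul, ← det_transpose a, ← det_mul, sub_eq_iff_eq_add.1 hJ.2.1]
    refine norm_det_add_eq_one (inv_prime_lt_one (p := p)) hμ1 (fun i j => ?_) (by simp [hμ])
    simpa using norm_mul_apply_le (M := cᵀ) (fun i j => hc j i) hb i j
  have hda := norm_det_fin_two_le_one ha
  have hdd := norm_det_fin_two_le_one hd
  have := norm_nonneg a.det
  have := norm_nonneg d.det
  exact ⟨⟨ha, by nlinarith, h10⟩, hb, hc, hd, by nlinarith⟩

theorem s2_mul_s1_mul_s2_mul_nS (x y z : ℚ_[p]) :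
    s2 p * s1 p * s2 p * nS p x y z =
      fromBlocksFin 0 !![0, 1; 1, 0] (-!![0, 1; 1, 0]) (-(!![0, 1; 1, 0] * !![x, y; y, z])) := by
  ext i j
  fin_cases i <;> fin_cases j <;> simp [s1, s2, nS, mul_apply, Fin.sum_univ_four] <;> rfl

theorem exists_mem_Gamma0_of_eq_mul {x y z : ℚ_[p]} {q γ : Matrix (Fin 4) (Fin 4) ℚ_[p]}
    (hq : q ∈ PS p) (hγ : γ ∈ Bp p) (h : s2 p * s1 p * s2 p * nS p x y z = q * γ) :
    (!![x, y; y, z]).det ≠ 0 ∧ (∀ i j, ‖(!![x, y; y, z])⁻¹ i j‖ ≤ (p : ℝ)⁻¹) ∧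
      ∃ γ' ∈ Gamma0 p, m2S p q = !![0, 1; 1, 0] * (!![x, y; y, z])⁻¹ * γ' := by
  obtain ⟨A, B, C, D, rfl⟩ := exists_eq_fromBlocksFin q
  obtain ⟨a, b, c, d, rfl⟩ := exists_eq_fromBlocksFin γ
  obtain ⟨-, hC00, hC01, hC10, hC11⟩ := hq
  have hC : C = 0 := by
    ext i j
    fin_cases i <;> fin_cases j
    exacts [hC00, hC01, hC10, hC11]
  subst hC
  have hm2S : m2S p (fromBlocksFin A B 0 D) = A := by
    ext i j
    fin_cases i <;> fin_cases j <;> rfl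
  obtain ⟨ha, hb, hc, hd, hdet⟩ := blocks_of_fromBlocksFin_mem_Bp hγ
  rw [s2_mul_s1_mul_s2_mul_nS, fromBlocksFin_mul, fromBlocksFin_inj] at h
  obtain ⟨h₁, h₂, h₃, h₄⟩ := h
  rw [hm2S]
  exact exists_mem_Gamma0_of_blocks ha hb hc hd hdet h₁.symm h₂.symm
    (by simpa using h₃.symm) (by simpa using h₄.symm)

theorem exists_mem_PS_mem_Bp_of_norm_inv_le {Y : Matrix (Fin 2) (Fin 2) ℚ_[p]} (hYt : Yᵀ = Y)
    (hY : Y.det ≠ 0) (hYinv : ∀ i j, ‖Y⁻¹ i j‖ ≤ (p : ℝ)⁻¹) :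
    ∃ q ∈ PS p, ∃ γ ∈ Bp p,
      fromBlocksFin 0 !![0, 1; 1, 0] (-!![0, 1; 1, 0]) (-(!![0, 1; 1, 0] * Y)) = q * γ := by
  set w : Matrix (Fin 2) (Fin 2) ℚ_[p] := !![0, 1; 1, 0]
  have hw : wᵀ * w = 1 := by
    ext i j
    fin_cases i <;> fin_cases j <;> simp [w, mul_apply]
  have hYu : IsUnit Y.det := isUnit_iff_ne_zero.2 hY
  have hYinvt : (Y⁻¹)ᵀ = Y⁻¹ := by rw [transpose_nonsing_inv, hYt]
  refine ⟨fromBlocksFin (-(w * Y⁻¹)) w 0 (-(w * Y)), fromBlocksFin_mem_PS one_ne_zero ?_ ?_,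
    fromBlocksFin 1 0 Y⁻¹ 1, fromBlocksFin_one_zero_mem_Bp hYinvt hYinv, ?_⟩
  · rw [transpose_neg, transpose_mul, hYinvt, neg_mul_neg, mul_assoc, ← mul_assoc wᵀ, hw, one_mul,
      nonsing_inv_mul _ hYu, one_smul]
  · rw [mul_neg, ← mul_assoc, hw, one_mul, transpose_neg, transpose_mul, hYt, neg_mul, mul_assoc,
      hw, mul_one]
  · rw [fromBlocksFin_mul, fromBlocksFin_inj]
    simp [mul_assoc, mul_nonsing_inv _ hYu]

theorem Padic.addValuation_lt_iff_norm_lt {a b : ℚ_[p]} :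
    Padic.addValuation a < Padic.addValuation b ↔ ‖b‖ < ‖a‖ := by
  rcases eq_or_ne a 0 with rfl | ha
  · simp
  rcases eq_or_ne b 0 with rfl | hb
  · simp [ha]
  rw [Padic.addValuation.apply ha, Padic.addValuation.apply hb, WithTop.coe_lt_coe,
    Padic.norm_eq_zpow_neg_valuation ha, Padic.norm_eq_zpow_neg_valuation hb,
    zpow_lt_zpow_iff_right₀ (by exact_mod_cast (Fact.out : p.Prime).one_lt), neg_lt_neg_iff]

theorem addValuation_lt_min_iff (x y z : ℚ_[p]) :
    Padic.addValuation (x * z - y ^ 2) <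
        min (Padic.addValuation x) (min (Padic.addValuation y) (Padic.addValuation z)) ↔
      (!![x, y; y, z]).det ≠ 0 ∧ ∀ i j, ‖(!![x, y; y, z])⁻¹ i j‖ ≤ (p : ℝ)⁻¹ := by
  have hdet : (!![x, y; y, z]).det = x * z - y ^ 2 := by rw [det_fin_two_of, sq]
  simp only [lt_min_iff, Padic.addValuation_lt_iff_norm_lt, inv_fin_two, hdet]
  rcases eq_or_ne (x * z - y ^ 2) 0 with h0 | h0
  · simp [h0]
  have key (t : ℚ_[p]) : ‖t‖ < ‖x * z - y ^ 2‖ ↔ ‖(x * z - y ^ 2)⁻¹ * t‖ ≤ (p : ℝ)⁻¹ := by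
    calc ‖t‖ < ‖x * z - y ^ 2‖ ↔ ‖(x * z - y ^ 2)⁻¹ * t‖ < (p : ℝ) ^ (0 : ℤ) := by
          rw [zpow_zero, norm_mul, norm_inv, inv_mul_lt_one₀ (norm_pos_iff.2 h0)]
      _ ↔ _ := by rw [Padic.norm_lt_pow_iff_norm_le_pow_sub_one, zero_sub, _root_.zpow_neg_one]
  simp [Fin.forall_fin_two, key, h0]
  tauto

end Siegel

/-- `σ·n ∈ P_S(ℚ_p)·B(p)` iff `min{v_p(x), v_p(y), v_p(z)} > v_p(xz−y²)`
(here `σ = s₂s₁s₂` and `n` is the unipotent matrix attached to `Y = [[x,y],[y,z]]`);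
moreover in that case any factorization `σ·n = q·γ` with `q ∈ P_S(ℚ_p)`, `γ ∈ B(p)`
satisfies `m₂(q) ∈ [[0,1],[1,0]]·Y⁻¹·Γ₀(p)`. -/
theorem stmt_9 (p : ℕ) [Fact p.Prime] (x y z : ℚ_[p]) :
    ((∃ q ∈ PS p, ∃ γ ∈ Bp p, s2 p * s1 p * s2 p * nS p x y z = q * γ) ↔
      Padic.addValuation (x * z - y ^ 2) <
        min (Padic.addValuation x) (min (Padic.addValuation y) (Padic.addValuation z))) ∧
    (∀ q γ : Matrix (Fin 4) (Fin 4) ℚ_[p], q ∈ PS p → γ ∈ Bp p →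
      s2 p * s1 p * s2 p * nS p x y z = q * γ →
      ∃ γ' ∈ Gamma0 p, m2S p q = !![0, 1; 1, 0] * (!![x, y; y, z])⁻¹ * γ') := by
  refine ⟨⟨fun ⟨q, hq, γ, hγ, h⟩ => ?_, fun hv => ?_⟩,
    fun q γ hq hγ h => (exists_mem_Gamma0_of_eq_mul hq hγ h).2.2⟩
  · obtain ⟨hY, hYinv, -⟩ := exists_mem_Gamma0_of_eq_mul hq hγ h
    exact (addValuation_lt_min_iff x y z).2 ⟨hY, hYinv⟩
  · obtain ⟨hY, hYinv⟩ := (addValuation_lt_min_iff x y z).1 hv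
    rw [s2_mul_s1_mul_s2_mul_nS]
    exact exists_mem_PS_mem_Bp_of_norm_inv_le (by ext i j; fin_cases i <;> fin_cases j <;> rfl)
      hY hYinv
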